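/- arXiv:0711.0581 — 7 statements merged into one kernel-verified Lean document; each statement's English description precedes it below -/
import Mathlib

section
/- Let l be an odd prime and let G be a finite non-abelian l-group possessing an abelian subgroup G' of index l. Then l·|[G,G]| divides [G : Z(G)], i.e. the rational number [G : Z(G)]/(l·|[G,G]|) is an integer. (Lemma 4.1(2).) -/
/-!
Being of index `l` in an `l`-group, `G'` is normal. Fix `x ∉ G'`; as `G'` is abelian and normal,
`a ↦ ⁅x, a⁆` is a homomorphism `G' →* G`. Since `G` is generated by `x` and `G'`, its kernel is
`Z(G) ∩ G'` and its image is `[G, G]` (the image is normal, and the quotient by it is generated by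
pairwise commuting elements). A central element outside `G'` would make `G` abelian, so
`Z(G) ≤ G'`, and therefore `[G : Z(G)] = [G' : Z(G)] · [G : G'] = |[G, G]| · l`.
-/

open scoped commutatorElement

theorem IsPGroup.normal_of_index_eq {G : Type*} [Group G] [Finite G] {p : ℕ} [hp : Fact p.Prime]
    (hG : IsPGroup p G) {H : Subgroup G} (hH : H.index = p) : H.Normal := by
  obtain ⟨n, hn⟩ := IsPGroup.iff_card.mp hG
  refine Subgroup.normal_of_index_eq_minFac_card ?_
  have hn0 : n ≠ 0 := by
    rintro rfl
    have : H.index ∣ 1 := pow_zero p ▸ hn ▸ H.index_dvd_card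
    exact hp.out.ne_one (hH ▸ Nat.dvd_one.mp this)
  rw [hn, hp.out.pow_minFac hn0, hH]

namespace Subgroup

variable {G : Type*} [Group G]

theorem closure_insert_eq_top_of_index_prime {A : Subgroup G} (hA : A.index.Prime) {x : G}
    (hx : x ∉ A) : closure (insert x (A : Set G)) = ⊤ := by
  set H := closure (insert x (A : Set G))
  have hAH : A ≤ H := fun a ha ↦ subset_closure (Set.mem_insert_of_mem x ha)
  rcases hA.eq_one_or_self_of_dvd _ (index_dvd_of_le hAH) with hH | hH
  · exact index_eq_one.mp hH
  · have hrel : A.relIndex H = 1 := by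
      have := relIndex_mul_index hAH
      rw [hH] at this
      exact (Nat.mul_eq_right hA.ne_zero).mp this
    exact absurd (relIndex_eq_one.mp hrel (subset_closure (Set.mem_insert x _))) hx

theorem mem_center_of_closure_eq_top {s : Set G} (hs : closure s = ⊤) {z : G}
    (hz : ∀ g ∈ s, g * z = z * g) : z ∈ center G := by
  rw [← centralizer_univ, ← coe_top, ← hs, centralizer_closure]
  exact mem_centralizer_iff.mpr hz

theorem isMulCommutative_of_closure_eq_top {s : Set G} (hs : closure s = ⊤)
    (hcomm : ∀ g ∈ s, ∀ h ∈ s, g * h = h * g) : IsMulCommutative G := by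
  refine center_eq_top_iff.mp (top_le_iff.mp ?_)
  rw [← hs, closure_le]
  exact fun g hg ↦ mem_center_of_closure_eq_top hs fun h hh ↦ hcomm h hh g hg

theorem commutator_le_of_closure_eq_top {s : Set G} (hs : closure s = ⊤) {N : Subgroup G}
    [N.Normal] (hN : ∀ g ∈ s, ∀ h ∈ s, ⁅g, h⁆ ∈ N) : _root_.commutator G ≤ N := by
  refine Normal.quotient_commutative_iff_commutator_le.mp
    (isMulCommutative_of_closure_eq_top (s := QuotientGroup.mk' N '' s) ?_ ?_)
  · rw [← MonoidHom.map_closure, hs, ← MonoidHom.range_eq_map, MonoidHom.range_eq_top]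
    exact QuotientGroup.mk'_surjective N
  · rintro _ ⟨g, hg, rfl⟩ _ ⟨h, hh, rfl⟩
    rw [← commutatorElement_eq_one_iff_mul_comm, ← map_commutatorElement,
      QuotientGroup.mk'_apply, QuotientGroup.eq_one_iff]
    exact hN g hg h hh

theorem center_le_of_closure_insert_eq_top {A : Subgroup G} [IsMulCommutative A]
    (hA : ∀ z ∉ A, closure (insert z (A : Set G)) = ⊤) (hG : ¬IsMulCommutative G) :
    center G ≤ A := by
  intro z hz
  by_contra hzA
  refine hG (isMulCommutative_of_closure_eq_top (hA z hzA) ?_)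
  rintro g (rfl | hg) h (rfl | hh)
  · rfl
  · exact (mem_center_iff.mp hz h).symm
  · exact mem_center_iff.mp hz g
  · exact setLike_mul_comm hg hh

variable (A : Subgroup G) [A.Normal] [IsMulCommutative A]

def commutatorHom (x : G) : A →* G where
  toFun a := ⁅x, (a : G)⁆
  map_one' := by simp
  map_mul' := by
    rintro ⟨a, ha⟩ ⟨b, hb⟩
    have hcomm : a * ⁅x, b⁆ = ⁅x, b⁆ * a :=
      setLike_mul_comm ha (A.mul_mem (‹A.Normal›.conj_mem b hb x) (A.inv_mem hb))
    simp only [commutatorElement_def, MulMemClass.mk_mul_mk] at hcomm ⊢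
    calc x * (a * b) * x⁻¹ * (a * b)⁻¹
        = x * a * x⁻¹ * a⁻¹ * (a * (x * b * x⁻¹ * b⁻¹) * a⁻¹) := by group
      _ = x * a * x⁻¹ * a⁻¹ * (x * b * x⁻¹ * b⁻¹) := by rw [hcomm]; group

variable {A} {x : G}

@[simp]
theorem commutatorHom_apply (a : A) : commutatorHom A x a = ⁅x, (a : G)⁆ := rfl

theorem range_commutatorHom_le : (commutatorHom A x).range ≤ A := by
  rintro _ ⟨a, rfl⟩
  exact A.mul_mem (‹A.Normal›.conj_mem _ a.2 x) (A.inv_mem a.2)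

theorem ker_commutatorHom (hx : closure (insert x (A : Set G)) = ⊤) :
    (commutatorHom A x).ker = (center G).subgroupOf A := by
  ext a
  rw [MonoidHom.mem_ker, commutatorHom_apply, commutatorElement_eq_one_iff_mul_comm,
    mem_subgroupOf]
  refine ⟨fun hxa ↦ mem_center_of_closure_eq_top hx ?_, fun ha ↦ (mem_center_iff.mp ha x)⟩
  rintro g (rfl | hg)
  · exact hxa
  · exact setLike_mul_comm hg a.2

theorem range_commutatorHom_normal (hx : closure (insert x (A : Set G)) = ⊤) :
    (commutatorHom A x).range.Normal := by
  -- conjugation by `x` sends `⁅x, a⁆` to `⁅x, x * a * x⁻¹⁆`, and `A` centralizes the range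
  refine normalizer_eq_top_iff.mp (top_le_iff.mp (hx ▸ (closure_le _).mpr ?_))
  rintro g (rfl | hg)
  · refine mem_normalizer_iff.mpr fun h ↦ ⟨?_, ?_⟩
    · rintro ⟨a, rfl⟩
      exact ⟨⟨g * a * g⁻¹, ‹A.Normal›.conj_mem _ a.2 g⟩,
        by simp [conjugate_commutatorElement]⟩
    · rintro ⟨a, ha⟩
      refine ⟨⟨g⁻¹ * a * g, by simpa using ‹A.Normal›.conj_mem _ a.2 g⁻¹⟩, ?_⟩
      calc ⁅g, g⁻¹ * a * g⁆ = g⁻¹ * ⁅g, (a : G)⁆ * g := by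
            simp only [commutatorElement_def]; group
        _ = h := by rw [commutatorHom_apply] at ha; rw [ha]; group
  · refine centralizer_le_normalizer _ (mem_centralizer_iff.mpr fun h hh ↦ ?_)
    exact setLike_mul_comm (range_commutatorHom_le hh) hg

theorem range_commutatorHom (hx : closure (insert x (A : Set G)) = ⊤) :
    (commutatorHom A x).range = _root_.commutator G := by
  have := range_commutatorHom_normal hx
  refine le_antisymm ?_ (commutator_le_of_closure_eq_top hx ?_)
  · rintro _ ⟨a, rfl⟩
    exact commutator_mem_commutator (mem_top x) (mem_top _)
  · rintro g (rfl | hg) h (rfl | hh)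
    · simp
    · exact ⟨⟨h, hh⟩, rfl⟩
    · rw [← commutatorElement_inv]
      exact inv_mem ⟨⟨g, hg⟩, rfl⟩
    · rw [commutatorElement_eq_one_iff_mul_comm.mpr (setLike_mul_comm hg hh)]
      exact one_mem _

end Subgroup

theorem stmt0_general (l : ℕ) (hl : l.Prime)
    (G : Type*) [Group G] [Fintype G] (hpG : IsPGroup l G)
    (hnab : ¬ ∀ a b : G, a * b = b * a)
    (G' : Subgroup G) (hab : ∀ x y : G', x * y = y * x) (hidx : G'.index = l) :
    l * Nat.card (commutator G) ∣ (Subgroup.center G).index := by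
  have : Fact l.Prime := ⟨hl⟩
  have : IsMulCommutative G' := ⟨⟨hab⟩⟩
  have : G'.Normal := hpG.normal_of_index_eq hidx
  have hgen : ∀ x ∉ G', Subgroup.closure (insert x (G' : Set G)) = ⊤ :=
    fun x hx ↦ Subgroup.closure_insert_eq_top_of_index_prime (hidx ▸ hl) hx
  obtain ⟨x, hx⟩ : ∃ x, x ∉ G' := by
    by_contra! h
    exact hl.ne_one (hidx ▸ Subgroup.index_eq_one.mpr (eq_top_iff.mpr fun g _ ↦ h g))
  have hZ : Subgroup.center G ≤ G' :=
    Subgroup.center_le_of_closure_insert_eq_top hgen fun h ↦ hnab h.is_comm.comm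
  refine dvd_of_eq (Eq.symm ?_)
  calc (Subgroup.center G).index = (Subgroup.center G).relIndex G' * G'.index :=
        (Subgroup.relIndex_mul_index hZ).symm
    _ = l * Nat.card (commutator G) := by
        rw [Subgroup.relIndex, ← Subgroup.ker_commutatorHom (hgen x hx), Subgroup.index_ker,
          Subgroup.range_commutatorHom (hgen x hx), hidx, mul_comm]

/-- **Lemma 4.1(2)**: If `l` is an odd prime and `G` is a finite non-abelian `l`-group
possessing an abelian subgroup `G'` of index `l`, then `l * |[G,G]|` divides `[G : Z(G)]`. -/
theorem stmt0 (l : ℕ) (hl : l.Prime) (hodd : Odd l)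
    (G : Type*) [Group G] [Fintype G] (hpG : IsPGroup l G)
    (hnab : ¬ ∀ a b : G, a * b = b * a)
    (G' : Subgroup G) (hab : ∀ x y : G', x * y = y * x) (hidx : G'.index = l) :
    l * Nat.card (commutator G) ∣ (Subgroup.center G).index :=
  stmt0_general l hl G hpG hnab G' hab hidx
end

section
/- Let G be a finite group, l a prime, and G' an abelian normal subgroup of G of index l. Let χ' : G' → ℂ^× be a group homomorphism and let ω : G → ℂ^× be a group homomorphism whose kernel is exactly G'. Then for every g ∈ G one has (Ind(h ↦ χ'(h^l)))(g) − (Ind χ')(g^l) = Σ_{i=0}^{l−1} χ'(ver(g))·ω(g)^i − l·χ'(ver(g)). (Lemma 4.1(1): ind_{G'}^{G}(ψ_l χ') − ψ_l(ind_{G'}^{G} χ') = Σ_{i=0}^{l−1}(χ'∘ver)ω^i − l·(χ'∘ver).) -/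
open scoped Classical

/-- The class function on `G` induced from a function `ψ` on a subgroup `G'`:
`(Ind ψ)(g) = |G'|⁻¹ · Σ_{x ∈ G, x g x⁻¹ ∈ G'} ψ(x g x⁻¹)`. -/
noncomputable def Ind {G : Type*} [Group G] [Fintype G] (G' : Subgroup G)
    (ψ : G' → ℂ) (g : G) : ℂ :=
  (Nat.card G' : ℂ)⁻¹ *
    ∑ x : G, if h : x * g * x⁻¹ ∈ G' then ψ ⟨x * g * x⁻¹, h⟩ else 0

/-- If `h ∈ G'` commutes with `g ∉ G'` and `G'` is abelian of prime index, then `h` is central. -/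
lemma central_aux {G : Type*} [Group G] {G' : Subgroup G}
    (hab : ∀ x y : G', x * y = y * x) (hpr : G'.index.Prime)
    {g : G} (hg : g ∉ G') {h : G} (hh : h ∈ G') (hcomm : g * h = h * g) :
    ∀ x : G, x * h = h * x := by
  set K := Subgroup.centralizer ({h} : Set G) with hK
  have hG'K : G' ≤ K := by
    intro a ha
    rw [hK, Subgroup.mem_centralizer_iff]
    intro b hb
    rcases Set.mem_singleton_iff.mp hb
    exact congrArg Subtype.val (hab ⟨h, hh⟩ ⟨a, ha⟩)
  have hgK : g ∈ K := by
    rw [hK, Subgroup.mem_centralizer_iff]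
    intro b hb
    rcases Set.mem_singleton_iff.mp hb
    exact hcomm.symm
  have hdvd : K.index ∣ G'.index := Subgroup.index_dvd_of_le hG'K
  have hKone : K.index = 1 := by
    rcases (Nat.Prime.eq_one_or_self_of_dvd hpr _ hdvd) with h1 | h1
    · exact h1
    · exfalso
      have := Subgroup.relIndex_mul_index hG'K
      rw [h1] at this
      have hrel : G'.relIndex K = 1 := by
        have hne : G'.index ≠ 0 := hpr.ne_zero
        have h2 : G'.relIndex K * G'.index = 1 * G'.index := by rw [one_mul]; exact this
        exact Nat.eq_of_mul_eq_mul_right (Nat.pos_of_ne_zero hne) h2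
      exact hg (Subgroup.relIndex_eq_one.mp hrel hgK)
  have hKtop : K = ⊤ := Subgroup.index_eq_one.mp hKone
  intro x
  have hx : x ∈ K := hKtop ▸ Subgroup.mem_top x
  exact ((Subgroup.mem_centralizer_iff.mp hx) h rfl).symm

/-- **Lemma 4.1(1)**:
`ind_{G'}^{G}(ψ_l χ') − ψ_l(ind_{G'}^{G} χ') = Σ_{i=0}^{l−1}(χ'∘ver)ω^i − l·(χ'∘ver)`. -/
theorem stmt1 (G : Type*) [Group G] [Fintype G] (l : ℕ) (hl : l.Prime)
    (G' : Subgroup G) [G'.Normal] [G'.FiniteIndex]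
    (hab : ∀ x y : G', x * y = y * x) (hidx : G'.index = l)
    (χ' : G' →* ℂˣ) (ω : G →* ℂˣ) (hω : ω.ker = G') (g : G) :
    Ind G' (fun h => ((χ' (h ^ l) : ℂˣ) : ℂ)) g
      - Ind G' (fun h => ((χ' h : ℂˣ) : ℂ)) (g ^ l)
    = ∑ i ∈ Finset.range l, ((χ'.transfer g : ℂˣ) : ℂ) * ((ω g : ℂˣ) : ℂ) ^ i
        - l * ((χ'.transfer g : ℂˣ) : ℂ) := by
  subst hidx
  set l := G'.index with hlidx
  have hpr : l.Prime := hl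
  have hcard0 : (Nat.card G' : ℂ) ≠ 0 := by
    exact_mod_cast Nat.card_pos.ne'
  by_cases hg : g ∈ G'
  · -- g ∈ G' : both sides are 0
    have hωg : ω g = 1 := by
      have : g ∈ ω.ker := hω ▸ hg
      exact this
    have hL : Ind G' (fun h => ((χ' (h ^ l) : ℂˣ) : ℂ)) g
        = Ind G' (fun h => ((χ' h : ℂˣ) : ℂ)) (g ^ l) := by
      unfold Ind
      congr 1
      refine Finset.sum_congr rfl fun x _ => ?_
      have h1 : x * g * x⁻¹ ∈ G' := Subgroup.Normal.conj_mem ‹G'.Normal› g hg x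
      have h2 : x * g ^ l * x⁻¹ ∈ G' := Subgroup.Normal.conj_mem ‹G'.Normal› _ (G'.pow_mem hg l) x
      rw [dif_pos h1, dif_pos h2]
      exact congrArg (fun u : ℂˣ => (u : ℂ))
        (congrArg χ' (Subtype.ext (by push_cast; exact conj_pow)))
    rw [hL, sub_self, hωg]
    simp
  · -- g ∉ G'
    have hgl : g ^ l ∈ G' := Subgroup.pow_index_mem G' g
    have key : ∀ (k : ℕ) (x : G), x⁻¹ * g ^ k * x ∈ G' → x⁻¹ * g ^ k * x = g ^ k := by
      intro k x hx
      have hk : g ^ k ∈ G' := by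
        have := Subgroup.Normal.conj_mem ‹G'.Normal› _ hx x
        simpa [mul_assoc] using this
      have hc : ∀ y : G, y * g ^ k = g ^ k * y :=
        central_aux hab hpr hg hk ((Commute.pow_right (Commute.refl g) k))
      rw [mul_assoc, ← hc x, ← mul_assoc, inv_mul_cancel, one_mul]
    have htr : χ'.transfer g = χ' ⟨g ^ l, hgl⟩ := by
      rw [MonoidHom.transfer_eq_pow χ' g key]
    have hcent : ∀ x : G, x * g ^ l * x⁻¹ = g ^ l := by
      intro x
      have hc : ∀ y : G, y * g ^ l = g ^ l * y :=
        central_aux hab hpr hg hgl ((Commute.pow_right (Commute.refl g) l))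
      rw [hc x, mul_assoc, mul_inv_cancel, mul_one]
    have hI1 : Ind G' (fun h => ((χ' (h ^ l) : ℂˣ) : ℂ)) g = 0 := by
      unfold Ind
      rw [Finset.sum_eq_zero, mul_zero]
      intro x _
      rw [dif_neg]
      intro hx
      have h2 := Subgroup.Normal.conj_mem ‹G'.Normal› _ hx x⁻¹
      rw [inv_inv] at h2
      exact hg (by rwa [show x⁻¹ * (x * g * x⁻¹) * x = g by group] at h2)
    have hI2 : Ind G' (fun h => ((χ' h : ℂˣ) : ℂ)) (g ^ l)
        = (l : ℂ) * ((χ' ⟨g ^ l, hgl⟩ : ℂˣ) : ℂ) := by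
      unfold Ind
      have hterm : ∀ x : G,
          (if h : x * g ^ l * x⁻¹ ∈ G' then ((χ' ⟨x * g ^ l * x⁻¹, h⟩ : ℂˣ) : ℂ) else 0)
          = ((χ' ⟨g ^ l, hgl⟩ : ℂˣ) : ℂ) := by
        intro x
        have hmem : x * g ^ l * x⁻¹ ∈ G' := Subgroup.Normal.conj_mem ‹G'.Normal› _ hgl x
        rw [dif_pos hmem]
        congr 1
        exact congrArg χ' (Subtype.ext (hcent x))
      rw [Finset.sum_congr rfl fun x _ => hterm x, Finset.sum_const, Finset.card_univ,
        nsmul_eq_mul]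
      have hcards : (Nat.card G' : ℂ) * (l : ℂ) = (Fintype.card G : ℂ) := by
        rw [← Nat.card_eq_fintype_card]
        exact_mod_cast congrArg Nat.cast (Subgroup.card_mul_index G')
      rw [← hcards]
      field_simp
    have hωg : ((ω g : ℂˣ) : ℂ) ≠ 1 := by
      intro h1
      apply hg
      rw [← hω]
      have : ω g = 1 := Units.ext (by simpa using h1)
      exact this
    have hωl : ((ω g : ℂˣ) : ℂ) ^ l = 1 := by
      have : ω (g ^ l) = 1 := by rw [← MonoidHom.mem_ker, hω]; exact hgl
      rw [← Units.val_pow_eq_pow_val, ← map_pow, this, Units.val_one]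
    have hgeom : ∑ i ∈ Finset.range l, ((ω g : ℂˣ) : ℂ) ^ i = 0 := by
      rw [geom_sum_eq hωg, hωl, sub_self, zero_div]
    rw [hI1, hI2, htr, ← Finset.mul_sum, hgeom, mul_zero]
end

section
/- Let l be an odd prime, G a group whose commutator subgroup [G,G] is contained in its center Z(G), G' an abelian normal subgroup of G, and a ∈ G an element with a^l ∈ G'. Then for every group homomorphism χ' : G' → ℂ^× and every g' ∈ G', one has Π_{i=0}^{l−1} χ'(a^i g' a^{−i}) = χ'(g')^l. (Lemma 4.3(2).) -/
/-!
Since `[G,G]` is central, `c := ⁅a, g'⁆` commutes with `a`, so conjugating `g'` by `a ^ i`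
multiplies it by `c ^ i`. As `a ^ l` lies in the abelian group `G'`, it centralises `g'`, which
forces `c ^ l = 1`. The product therefore equals `χ'(c) ^ (0 + 1 + ⋯ + (l - 1)) * χ'(g') ^ l`, and
for odd `l` the exponent `l (l - 1) / 2` is a multiple of `l`.
-/

open Finset
open scoped commutatorElement

theorem conj_pow_eq_commutatorElement_pow_mul {G : Type*} [Group G] {a g : G}
    (hc : Commute ⁅a, g⁆ a) (n : ℕ) : a ^ n * g * (a ^ n)⁻¹ = ⁅a, g⁆ ^ n * g := by
  induction n with
  | zero => simp
  | succ n ih =>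
    calc a ^ (n + 1) * g * (a ^ (n + 1))⁻¹ = a * (a ^ n * g * (a ^ n)⁻¹) * a⁻¹ := by group
      _ = a * ⁅a, g⁆ ^ n * g * a⁻¹ := by rw [ih]; group
      _ = ⁅a, g⁆ ^ n * (a * g * a⁻¹ * g⁻¹) * g := by rw [← (hc.pow_left n).eq]; group
      _ = ⁅a, g⁆ ^ (n + 1) * g := by rw [← commutatorElement_def, pow_succ]

theorem commutatorElement_pow_eq_one_of_commute_pow {G : Type*} [Group G] {a g : G} {n : ℕ}
    (hc : Commute ⁅a, g⁆ a) (hn : Commute (a ^ n) g) : ⁅a, g⁆ ^ n = 1 := by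
  have h := conj_pow_eq_commutatorElement_pow_mul hc n
  rwa [hn.eq, mul_inv_cancel_right, right_eq_mul] at h

theorem Odd.dvd_sum_range_id {n : ℕ} (hn : Odd n) : n ∣ ∑ i ∈ range n, i := by
  obtain ⟨k, rfl⟩ := hn
  refine ⟨k, ?_⟩
  rw [sum_range_id, Nat.add_sub_cancel, Nat.mul_div_assoc _ (dvd_mul_right 2 k),
    Nat.mul_div_cancel_left k two_pos]

theorem prod_range_pow_mul_of_pow_eq_one {M : Type*} [CommMonoid M] {c : M} {n : ℕ}
    (hc : c ^ n = 1) (hn : Odd n) (x : M) : ∏ i ∈ range n, c ^ i * x = x ^ n := by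
  obtain ⟨k, hk⟩ := hn.dvd_sum_range_id
  rw [prod_mul_distrib, prod_pow_eq_pow_sum, prod_const, card_range, hk, pow_mul, hc, one_pow,
    one_mul]

theorem stmt3_general (l : ℕ) (hodd : Odd l)
    (G : Type*) [Group G] (hcen : commutator G ≤ Subgroup.center G)
    (G' : Subgroup G) [hN : G'.Normal] (hab : ∀ x y : G', x * y = y * x)
    (a : G) (ha : a ^ l ∈ G')
    (χ' : G' →* ℂˣ) (g' : G) (hg' : g' ∈ G') :
    ∏ i ∈ Finset.range l, χ' ⟨a ^ i * g' * (a ^ i)⁻¹, hN.conj_mem g' hg' (a ^ i)⟩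
      = χ' ⟨g', hg'⟩ ^ l := by
  have hc_comm : Commute ⁅a, g'⁆ a := (Subgroup.mem_center_iff.mp
    (hcen (Subgroup.commutator_mem_commutator (Subgroup.mem_top a) (Subgroup.mem_top g'))) a).symm
  have hc_mem : ⁅a, g'⁆ ∈ G' := Subgroup.commutator_le_right ⊤ G'
    (Subgroup.commutator_mem_commutator (Subgroup.mem_top a) hg')
  have hcl : χ' ⟨_, hc_mem⟩ ^ l = 1 := by
    rw [← map_pow, ← map_one χ']
    congr 1
    exact Subtype.ext (commutatorElement_pow_eq_one_of_commute_pow hc_comm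
      (congrArg Subtype.val (hab ⟨_, ha⟩ ⟨g', hg'⟩)))
  have hterm (i : ℕ) : (⟨a ^ i * g' * (a ^ i)⁻¹, hN.conj_mem g' hg' (a ^ i)⟩ : G')
      = ⟨_, hc_mem⟩ ^ i * ⟨g', hg'⟩ :=
    Subtype.ext (conj_pow_eq_commutatorElement_pow_mul hc_comm i)
  simp_rw [hterm, map_mul, map_pow]
  exact prod_range_pow_mul_of_pow_eq_one hcl hodd _

/-- **Lemma 4.3(2)**: if `[G,G] ⊆ Z(G)`, `G'` is an abelian normal subgroup and
`a^l ∈ G'`, then for every homomorphism `χ' : G' → ℂˣ` and every `g' ∈ G'` one has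
`Π_{i=0}^{l−1} χ'(a^i g' a^{−i}) = χ'(g')^l`. -/
theorem stmt3 (l : ℕ) (hl : l.Prime) (hodd : Odd l)
    (G : Type*) [Group G] (hcen : commutator G ≤ Subgroup.center G)
    (G' : Subgroup G) [hN : G'.Normal] (hab : ∀ x y : G', x * y = y * x)
    (a : G) (ha : a ^ l ∈ G')
    (χ' : G' →* ℂˣ) (g' : G) (hg' : g' ∈ G') :
    ∏ i ∈ Finset.range l, χ' ⟨a ^ i * g' * (a ^ i)⁻¹, hN.conj_mem g' hg' (a ^ i)⟩
      = χ' ⟨g', hg'⟩ ^ l :=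
  stmt3_general l hodd G hcen G' (hN := hN) hab a ha χ' g' hg'
end

section
/- Let l be an odd prime, R a commutative ring, G' an abelian group, and σ an automorphism of G' with σ^l = id such that for every b ∈ G' the element σ(b)·b^{−1} is fixed by σ and satisfies (σ(b)·b^{−1})^l = 1. Extend σ to a ring automorphism of the group algebra R[G'] and let T' be the image of the trace map x ↦ Σ_{i=0}^{l−1} σ^i(x) on R[G']. Then for every x ∈ T' and every natural number v, the element x^{l^v} lies in l^v·T', i.e. x^{l^v} = l^v·y for some y ∈ T'. (Lemma 4.3(3).) -/
/-!
The image `T'` of the trace `Tr = ∑_{i<l} σ^i` consists of `σ`-fixed elements and is stable under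
multiplication by fixed elements, since `Tr a * P = Tr (a * P)` when `σ P = P`. For `x = Tr a` and
`y = Tr b`, `add_pow_prime_eq` writes `(x + y)^l - x^l - y^l` as `l * x * Q` with `Q` fixed, and
`x * Q = Tr (a * Q)`; so `Tr(w)^l ∈ l • T'` only has to be checked on monomials `w = r b`.
With `c = σ(b) b⁻¹` we get `Tr(r b) = r b * N` for `N = ∑_{i<l} c^i`, and `N^2 = l • N` because
`c^l = 1`. Hence `Tr(r b)^l = l^(l-1) • F` with `F = r^l b^l * N` fixed, while `Tr F = l • F`;
for `l ≥ 3` this leaves `Tr(r b)^l ∈ l • T'`. The passage from `l` to `l^v` is formal.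
-/

open Finset

theorem Finset.sum_range_shift_eq_of_eq {M : Type*} [AddCancelCommMonoid M] {f : ℕ → M} {n : ℕ}
    (h : f n = f 0) : ∑ i ∈ range n, f (i + 1) = ∑ i ∈ range n, f i :=
  add_right_cancel (b := f 0) (by rw [← sum_range_succ', sum_range_succ, h])

section GeomSum

variable {S : Type*} [CommRing S] {z : S} {n : ℕ}

theorem mul_geom_sum_of_pow_eq_one (hz : z ^ n = 1) :
    z * ∑ i ∈ range n, z ^ i = ∑ i ∈ range n, z ^ i := by
  simp_rw [mul_sum, ← pow_succ']
  exact sum_range_shift_eq_of_eq (f := (z ^ ·)) (by simp [hz])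

theorem geom_sum_pow_succ_of_pow_eq_one (hz : z ^ n = 1) (k : ℕ) :
    (∑ i ∈ range n, z ^ i) ^ (k + 1) = n ^ k • ∑ i ∈ range n, z ^ i := by
  set N := ∑ i ∈ range n, z ^ i
  have hpow (i : ℕ) : z ^ i * N = N := by
    induction i with
    | zero => simp
    | succ i ih => rw [pow_succ, mul_assoc, mul_geom_sum_of_pow_eq_one hz, ih]
  have hsq : N * N = n • N := by
    rw [sum_mul, sum_congr rfl fun i _ => hpow i, sum_const, card_range]
  induction k with
  | zero => simp
  | succ k ih => rw [pow_succ, ih, smul_mul_assoc, hsq, smul_smul, pow_succ]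

end GeomSum

theorem pow_smul_eq_of_smul_eq {M α : Type*} [Monoid M] [MulAction M α] {g : M} {a : α}
    (ha : g • a = a) (i : ℕ) : g ^ i • a = a := by
  rw [← smul_iterate_apply]
  exact Function.iterate_fixed ha i

section CyclicTrace

variable {M S : Type*} [Monoid M] [CommRing S] [MulSemiringAction M S]

noncomputable def cyclicTrace (g : M) (l : ℕ) : S →+ S :=
  ∑ i ∈ range l, DistribSMul.toAddMonoidHom S (g ^ i)

theorem cyclicTrace_apply (g : M) (l : ℕ) (x : S) :
    cyclicTrace g l x = ∑ i ∈ range l, g ^ i • x := by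
  simp [cyclicTrace]

variable {g : M} {l : ℕ}

theorem smul_cyclicTrace (hg : g ^ l = 1) (x : S) : g • cyclicTrace g l x = cyclicTrace g l x := by
  simp_rw [cyclicTrace_apply, smul_sum, smul_smul, ← pow_succ']
  exact sum_range_shift_eq_of_eq (f := (g ^ · • x)) (by simp [hg])

theorem cyclicTrace_mul_of_smul_eq {P : S} (hP : g • P = P) (x : S) :
    cyclicTrace g l x * P = cyclicTrace g l (x * P) := by
  simp_rw [cyclicTrace_apply, sum_mul, smul_mul', pow_smul_eq_of_smul_eq hP]

theorem cyclicTrace_of_smul_eq {P : S} (hP : g • P = P) : cyclicTrace g l P = l • P := by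
  simp [cyclicTrace_apply, pow_smul_eq_of_smul_eq hP]

theorem exists_cyclicTrace_add_pow (hl : l.Prime) (hg : g ^ l = 1) {a b : S}
    (ha : ∃ u, cyclicTrace g l a ^ l = l • cyclicTrace g l u)
    (hb : ∃ u, cyclicTrace g l b ^ l = l • cyclicTrace g l u) :
    ∃ u, cyclicTrace g l (a + b) ^ l = l • cyclicTrace g l u := by
  obtain ⟨u, hu⟩ := ha
  obtain ⟨u', hu'⟩ := hb
  set A := cyclicTrace g l a
  set B := cyclicTrace g l b
  set Q := B * ∑ k ∈ Ioo 0 l, A ^ (k - 1) * B ^ (l - k - 1) * ((l.choose k / l : ℕ) : S)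
  have hQ : g • Q = Q := by
    have hA : g • A = A := smul_cyclicTrace hg a
    have hB : g • B = B := smul_cyclicTrace hg b
    rw [← MulSemiringAction.toRingHom_apply] at hA hB ⊢
    simp only [Q, map_mul, map_sum, map_pow, map_natCast, hA, hB]
  refine ⟨u + u' + a * Q, ?_⟩
  rw [map_add, add_pow_prime_eq hl, hu, hu', map_add, map_add,
    ← cyclicTrace_mul_of_smul_eq hQ, nsmul_add, nsmul_add, nsmul_eq_mul, nsmul_eq_mul,
    nsmul_eq_mul]
  ring

theorem exists_cyclicTrace_pow_pow (hl : 0 < l)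
    (h : ∀ w : S, ∃ u, cyclicTrace g l w ^ l = l • cyclicTrace g l u) (v : ℕ) (w : S) :
    ∃ u, cyclicTrace g l w ^ l ^ v = l ^ v • cyclicTrace g l u := by
  induction v generalizing w with
  | zero => exact ⟨w, by simp⟩
  | succ v ih =>
    obtain ⟨u, hu⟩ := ih w
    obtain ⟨u', hu'⟩ := h u
    obtain ⟨k, rfl⟩ := Nat.exists_eq_add_one_of_ne_zero hl.ne'
    refine ⟨(k + 1) ^ (v * k) • u', ?_⟩
    rw [pow_succ, pow_mul, hu, smul_pow, hu', map_nsmul, smul_smul, smul_smul]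
    congr 1
    ring

end CyclicTrace

theorem MulAut.pow_apply_eq_pow_mul {G : Type*} [Group G] {σ : MulAut G}
    (hfix : ∀ b : G, σ (σ b * b⁻¹) = σ b * b⁻¹) (i : ℕ) (b : G) :
    (σ ^ i) b = (σ b * b⁻¹) ^ i * b := by
  induction i with
  | zero => simp
  | succ i ih => rw [pow_succ', MulAut.mul_apply, ih, map_mul, map_pow, hfix, pow_succ, mul_assoc,
      inv_mul_cancel_right]

section MonoidAlgebra

variable {R G : Type*} [CommRing R] [CommGroup G] {σ : MulAut G} {l : ℕ}

-- `σ` extended to `R[G]`, acting on it through `AlgEquiv.applyMulSemiringAction`.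
local notation "τ" => MonoidAlgebra.domCongrAut (R := ℕ) (A := R) σ

theorem cyclicTrace_domCongrAut (w : MonoidAlgebra R G) :
    cyclicTrace τ l w = ∑ i ∈ range l, MonoidAlgebra.mapDomain ⇑(σ ^ i) w := by
  simp_rw [cyclicTrace_apply, ← map_pow]
  rfl

theorem cyclicTrace_domCongrAut_single (hfix : ∀ b : G, σ (σ b * b⁻¹) = σ b * b⁻¹)
    (b : G) (r : R) :
    cyclicTrace τ l (MonoidAlgebra.single b r) =
      MonoidAlgebra.single b r * ∑ i ∈ range l, MonoidAlgebra.of R G (σ b * b⁻¹) ^ i := by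
  simp_rw [cyclicTrace_domCongrAut, mul_sum, ← map_pow, MonoidAlgebra.of_apply,
    MonoidAlgebra.mapDomain_single, MonoidAlgebra.single_mul_single, mul_one,
    MulAut.pow_apply_eq_pow_mul hfix, mul_comm b]

theorem exists_cyclicTrace_domCongrAut_single_pow (hl : 3 ≤ l)
    (hfix : ∀ b : G, σ (σ b * b⁻¹) = σ b * b⁻¹) (hord : ∀ b : G, (σ b * b⁻¹) ^ l = 1)
    (b : G) (r : R) :
    ∃ u, cyclicTrace τ l (MonoidAlgebra.single b r) ^ l = l • cyclicTrace τ l u := by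
  set N := ∑ i ∈ range l, MonoidAlgebra.of R G (σ b * b⁻¹) ^ i
  have hN : τ • N = N := by
    simp_rw [N, smul_sum, smul_pow', AlgEquiv.smul_def, MonoidAlgebra.domCongrAut_apply,
      MonoidAlgebra.of_apply, MonoidAlgebra.domCongr_single, hfix b]
  have hbl : σ (b ^ l) = b ^ l := by
    rw [map_pow, ← div_mul_cancel (σ b) b, mul_pow, div_eq_mul_inv, hord, one_mul]
  set F := MonoidAlgebra.single (b ^ l) (r ^ l) * N
  have hF : τ • F = F := by
    rw [smul_mul', hN, AlgEquiv.smul_def, MonoidAlgebra.domCongrAut_apply,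
      MonoidAlgebra.domCongr_single, hbl]
  obtain ⟨k, rfl⟩ : ∃ k, l = k + 3 := ⟨l - 3, by omega⟩
  refine ⟨(k + 3) ^ k • F, ?_⟩
  rw [cyclicTrace_domCongrAut_single hfix, mul_pow, MonoidAlgebra.single_pow,
    geom_sum_pow_succ_of_pow_eq_one (by rw [← map_pow, hord, map_one]) (k + 2), map_nsmul,
    cyclicTrace_of_smul_eq hF, mul_smul_comm, smul_smul, smul_smul]
  congr 1
  ring

theorem exists_cyclicTrace_domCongrAut_pow (hl : l.Prime) (hodd : Odd l) (hσ : σ ^ l = 1)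
    (hfix : ∀ b : G, σ (σ b * b⁻¹) = σ b * b⁻¹) (hord : ∀ b : G, (σ b * b⁻¹) ^ l = 1)
    (w : MonoidAlgebra R G) : ∃ u, cyclicTrace τ l w ^ l = l • cyclicTrace τ l u := by
  have hτ : τ ^ l = 1 := by rw [← map_pow, hσ, map_one]
  have hl3 : 3 ≤ l := by obtain ⟨k, rfl⟩ := hodd; have := hl.two_le; omega
  induction w using MonoidAlgebra.induction_linear with
  | zero => exact ⟨0, by simp [hl.ne_zero]⟩
  | add a b ha hb => exact exists_cyclicTrace_add_pow hl hτ ha hb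
  | single b r => exact exists_cyclicTrace_domCongrAut_single_pow hl3 hfix hord b r

end MonoidAlgebra

/-- **Lemma 4.3(3)**: let `l` be an odd prime, `R` a commutative ring, `G'` an abelian
group and `σ` an automorphism of `G'` with `σ^l = 1` such that `σ(b)·b⁻¹` is fixed by
`σ` and `(σ(b)·b⁻¹)^l = 1` for all `b`. Let `T'` be the image of the trace map
`x ↦ Σ_{i=0}^{l−1} σ^i(x)` on the group algebra `R[G']`. Then for `x ∈ T'` and any
`v : ℕ` one has `x^{l^v} ∈ l^v·T'`. -/
theorem stmt4 (l : ℕ) (hl : l.Prime) (hodd : Odd l)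
    (R : Type*) [CommRing R] (G' : Type*) [CommGroup G']
    (σ : MulAut G') (hσ : σ ^ l = 1)
    (hfix : ∀ b : G', σ (σ b * b⁻¹) = σ b * b⁻¹)
    (hord : ∀ b : G', (σ b * b⁻¹) ^ l = 1)
    (x : MonoidAlgebra R G')
    (hx : ∃ w : MonoidAlgebra R G',
      x = ∑ i ∈ Finset.range l, MonoidAlgebra.mapDomain ⇑(σ ^ i) w)
    (v : ℕ) :
    ∃ y : MonoidAlgebra R G',
      (∃ w : MonoidAlgebra R G',
        y = ∑ i ∈ Finset.range l, MonoidAlgebra.mapDomain ⇑(σ ^ i) w) ∧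
      x ^ (l ^ v) = (l ^ v : ℕ) • y := by
  obtain ⟨w, rfl⟩ := hx
  obtain ⟨u, hu⟩ := exists_cyclicTrace_pow_pow hl.pos
    (exists_cyclicTrace_domCongrAut_pow hl hodd hσ hfix hord) v w
  simp_rw [cyclicTrace_domCongrAut] at hu
  exact ⟨_, ⟨u, rfl⟩, hu⟩
end

section
/- Let G be a group, G' an abelian normal subgroup of G, and a ∈ G such that G is generated by G' together with a. Then the map φ : G' → G', φ(g') = a g' a^{−1} g'^{−1}, is a group homomorphism of G' into itself, and its range equals the commutator subgroup [G,G] of G. In particular, every element of [G,G] is a single commutator of the form a g' a^{−1} g'^{−1} with g' ∈ G'. (Claim used in the proof of Lemma 4.1(2): [G,G] = [⟨a⟩,G'].) -/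
/-!
Because `G'` is abelian and normal, `⁅a, xy⁆ = ⁅a, x⁆ · x⁅a, y⁆x⁻¹ = ⁅a, x⁆⁅a, y⁆` for `x, y ∈ G'`,
so the image `K` of `x ↦ ⁅a, x⁆` is a subgroup of `G'`. It is centralized by `G'` and normalized
by `a`, since `a⁁a, x⁆a⁻¹ = ⁅a, axa⁻¹⁆`; as `a` and `G'` generate `G`, `K` is normal. In `G ⧸ K`
the generators commute pairwise, so `G ⧸ K` is abelian and `[G, G] ≤ K ≤ [G, G]`.
-/

open scoped commutatorElement

section Generators

variable {G : Type*} [Group G]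

theorem mul_comm_of_closure_eq_top {s : Set G} (hs : Subgroup.closure s = ⊤)
    (hcomm : ∀ x ∈ s, ∀ y ∈ s, x * y = y * x) (x y : G) : x * y = y * x := by
  have hcc : ∀ z : G, z ∈ s.centralizer.centralizer := fun z ↦
    Subgroup.closure_le_centralizer_centralizer s (hs ▸ Subgroup.mem_top z)
  exact Set.centralizer_centralizer_comm_of_comm hcomm x (hcc x) y (hcc y)

theorem commutator_le_of_closure_eq_top {K : Subgroup G} [K.Normal] {s : Set G}
    (hs : Subgroup.closure s = ⊤) (hcomm : ∀ x ∈ s, ∀ y ∈ s, ⁅x, y⁆ ∈ K) : commutator G ≤ K := by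
  have hsK : Subgroup.closure (QuotientGroup.mk' K '' s) = ⊤ := by
    rw [← MonoidHom.map_closure, hs,
      Subgroup.map_top_of_surjective _ (QuotientGroup.mk'_surjective K)]
  have hquot := mul_comm_of_closure_eq_top hsK (by
    rintro _ ⟨x, hx, rfl⟩ _ ⟨y, hy, rfl⟩
    rw [← commutatorElement_eq_one_iff_mul_comm, ← map_commutatorElement,
      ← MonoidHom.mem_ker, QuotientGroup.ker_mk']
    exact hcomm x hx y hy)
  rw [commutator_def, Subgroup.commutator_le]
  intro x _ y _
  rw [← QuotientGroup.ker_mk' K, MonoidHom.mem_ker, map_commutatorElement,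
    commutatorElement_eq_one_iff_mul_comm]
  exact hquot _ _

theorem Subgroup.normal_of_closure_subset_normalizer {K : Subgroup G} {s : Set G}
    (hs : Subgroup.closure s = ⊤) (hsK : s ⊆ normalizer (K : Set G)) : K.Normal :=
  normalizer_eq_top_iff.mp (eq_top_iff.mpr (hs ▸ closure_le _ |>.mpr hsK))

end Generators

section AbelianNormal

variable {G : Type*} [Group G] {N : Subgroup G} [N.Normal]

theorem commutatorElement_mem_of_normal (a : G) {x : G} (hx : x ∈ N) : ⁅a, x⁆ ∈ N :=
  mul_mem (‹N.Normal›.conj_mem x hx a) (inv_mem hx)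

variable (hN : ∀ x y : N, x * y = y * x)
include hN

theorem commutatorElement_mul_right_of_abelian_normal (a : G) {x y : G} (hx : x ∈ N)
    (hy : y ∈ N) : ⁅a, x * y⁆ = ⁅a, x⁆ * ⁅a, y⁆ := by
  have hcomm : x * ⁅a, y⁆ = ⁅a, y⁆ * x :=
    congrArg Subtype.val (hN ⟨x, hx⟩ ⟨_, commutatorElement_mem_of_normal a hy⟩)
  rw [commutatorElement_mul_right_eq_mul_conj, mul_assoc _ x, hcomm, ← mul_assoc,
    mul_inv_cancel_right]

def commutatorElementHom (a : G) : N →* G where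
  toFun x := ⁅a, (x : G)⁆
  map_one' := commutatorElement_one_right a
  map_mul' x y := commutatorElement_mul_right_of_abelian_normal hN a x.2 y.2

theorem range_commutatorElementHom_le (a : G) : (commutatorElementHom hN a).range ≤ N := by
  rintro _ ⟨x, rfl⟩
  exact commutatorElement_mem_of_normal a x.2

theorem le_normalizer_range_commutatorElementHom (a : G) :
    N ≤ Subgroup.normalizer ((commutatorElementHom hN a).range : Set G) := by
  refine le_trans ?_ (Subgroup.centralizer_le_normalizer _)
  intro n hn k hk
  exact congrArg Subtype.val (hN ⟨k, range_commutatorElementHom_le hN a hk⟩ ⟨n, hn⟩)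

theorem mem_normalizer_range_commutatorElementHom (a : G) :
    a ∈ Subgroup.normalizer ((commutatorElementHom hN a).range : Set G) := by
  refine Subgroup.mem_normalizer_iff.mpr fun k ↦ ⟨?_, ?_⟩
  · rintro ⟨x, rfl⟩
    refine ⟨⟨a * x * a⁻¹, ‹N.Normal›.conj_mem x x.2 a⟩, ?_⟩
    simp only [commutatorElementHom, MonoidHom.coe_mk, OneHom.coe_mk, commutatorElement_def]
    group
  · rintro ⟨⟨x, hxN⟩, hx⟩
    refine ⟨⟨a⁻¹ * x * a, by simpa using ‹N.Normal›.conj_mem x hxN a⁻¹⟩, ?_⟩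
    simp only [commutatorElementHom, MonoidHom.coe_mk, OneHom.coe_mk, commutatorElement_def] at hx ⊢
    calc a * (a⁻¹ * x * a) * a⁻¹ * (a⁻¹ * x * a)⁻¹ = a⁻¹ * (a * x * a⁻¹ * x⁻¹) * a := by group
      _ = k := by rw [hx]; group

theorem range_commutatorElementHom_eq_commutator {a : G}
    (hgen : Subgroup.closure (insert a (N : Set G)) = ⊤) :
    (commutatorElementHom hN a).range = commutator G := by
  refine le_antisymm ?_ ?_
  · rintro _ ⟨x, rfl⟩
    exact Subgroup.commutator_mem_commutator (Subgroup.mem_top a) (Subgroup.mem_top (x : G))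
  have : (commutatorElementHom hN a).range.Normal :=
    Subgroup.normal_of_closure_subset_normalizer hgen <|
      Set.insert_subset (mem_normalizer_range_commutatorElementHom hN a)
        (le_normalizer_range_commutatorElementHom hN a)
  refine commutator_le_of_closure_eq_top hgen ?_
  rintro x (rfl | hx) y (rfl | hy)
  · rw [commutatorElement_self]
    exact one_mem _
  · exact ⟨⟨y, hy⟩, rfl⟩
  · rw [← commutatorElement_inv]
    exact inv_mem ⟨⟨x, hx⟩, rfl⟩
  · rw [commutatorElement_eq_one_iff_mul_comm.mpr (congrArg Subtype.val (hN ⟨x, hx⟩ ⟨y, hy⟩))]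
    exact one_mem _

end AbelianNormal

/-- The claim used in the proof of Lemma 4.1(2): if `G'` is an abelian normal subgroup
of `G` and `G` is generated by `G'` together with `a`, then `g' ↦ a g' a⁻¹ g'⁻¹` is a
homomorphism on `G'` whose range is exactly the commutator subgroup `[G,G]`. -/
theorem stmt5 (G : Type*) [Group G] (G' : Subgroup G) [G'.Normal]
    (hab : ∀ x y : G', x * y = y * x) (a : G)
    (hgen : Subgroup.closure (insert a (G' : Set G)) = ⊤) :
    (∀ x y : G, x ∈ G' → y ∈ G' →
      a * (x * y) * a⁻¹ * (x * y)⁻¹ = (a * x * a⁻¹ * x⁻¹) * (a * y * a⁻¹ * y⁻¹)) ∧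
    (fun g' : G => a * g' * a⁻¹ * g'⁻¹) '' (G' : Set G) = (commutator G : Set G) := by
  refine ⟨fun x y hx hy ↦ commutatorElement_mul_right_of_abelian_normal hab a hx hy, ?_⟩
  rw [← range_commutatorElementHom_eq_commutator hab hgen, MonoidHom.coe_range, Set.image_eq_range]
  rfl
end

section
/- Let l be a prime and G a finite non-abelian group with an abelian normal subgroup G' of index l. Then: (i) Z(G) ≤ G'; (ii) for every g ∈ G \ G', the power g^l lies in Z(G); (iii) for every g ∈ G \ G', the centralizer of g in G equals the subgroup generated by Z(G) and g; and (iv) for every g ∈ G \ G', the conjugacy class of g in G has cardinality [G : Z(G)]/l. (Claims used in the proof of Proposition 4.2: for g ∉ G' the centralizer of g is Z(G)·⟨g⟩ and h_g = [G:Z(G)]/l.) -/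
/-!
Let `H` be abelian and normal of prime index `l`, and `g ∉ H`. Then `H` and `g` generate `G`,
so an element commuting with `H` and with `g` is central; as `H` is abelian,
`H ∩ C(g) ≤ Z(G)`. This gives `g ^ l ∈ Z(G)`, and writing an element of `C(g)` as `a * g ^ k`
with `a ∈ H` shows `C(g) = Z(G) ⟨g⟩`. A central element `z ∉ H` would make `G = H ⟨z⟩`
abelian, so `Z(G) ≤ H`; hence the image of `g` in `G ⧸ Z(G)` has order exactly `l`, and
`|g^G| = [G : C(g)] = [G : Z(G)] / l`.
-/

open Subgroup

namespace Subgroup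

variable {G : Type*} [Group G] {H : Subgroup G} {g : G}

theorem sup_zpowers_eq_top_of_index_prime (hH : H.index.Prime) (hg : g ∉ H) :
    H ⊔ zpowers g = ⊤ := by
  have hle : H ≤ H ⊔ zpowers g := le_sup_left
  rcases hH.eq_one_or_self_of_dvd _ (index_dvd_of_le hle) with h | h
  · exact index_eq_one.mp h
  · have hrel : H.relIndex (H ⊔ zpowers g) = 1 := by
      have := relIndex_mul_index hle
      rw [h] at this
      exact (Nat.mul_eq_right hH.ne_zero).mp this
    exact absurd (relIndex_eq_one.mp hrel (mem_sup_right (mem_zpowers g))) hg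

theorem centralizer_inf_centralizer_singleton_le_center (hH : H.index.Prime) (hg : g ∉ H) :
    centralizer H ⊓ centralizer {g} ≤ center G := by
  have hcen : centralizer ((H : Set G) ∪ {g}) = center G := by
    rw [← centralizer_closure, closure_union, closure_eq, ← zpowers_eq_closure,
      sup_zpowers_eq_top_of_index_prime hH hg, coe_top, centralizer_univ]
  rintro x ⟨hxH, hxg⟩
  rw [← hcen]
  rintro y (hy | hy)
  exacts [hxH y hy, hxg y hy]

theorem inf_centralizer_singleton_le_center [IsMulCommutative H] (hH : H.index.Prime)
    (hg : g ∉ H) : H ⊓ centralizer {g} ≤ center G :=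
  (inf_le_inf_right _ (le_centralizer H)).trans
    (centralizer_inf_centralizer_singleton_le_center hH hg)

theorem center_le_of_index_prime [IsMulCommutative H] (hH : H.index.Prime)
    (hG : center G ≠ ⊤) : center G ≤ H := by
  intro z hz
  by_contra hzH
  have hHZ : H ≤ center G := fun a ha =>
    inf_centralizer_singleton_le_center hH hzH
      ⟨ha, mem_centralizer_singleton_iff.mpr (mem_center_iff.mp hz a)⟩
  apply hG
  rw [eq_top_iff, ← sup_zpowers_eq_top_of_index_prime hH hzH]
  exact sup_le hHZ (zpowers_le.mpr hz)

theorem pow_index_mem_center [H.Normal] [IsMulCommutative H] (hH : H.index.Prime)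
    (hg : g ∉ H) : g ^ H.index ∈ center G :=
  inf_centralizer_singleton_le_center hH hg
    ⟨H.pow_index_mem g, mem_centralizer_singleton_iff.mpr (pow_mul_comm' g _)⟩

theorem centralizer_singleton_eq_center_sup_zpowers [H.Normal] [IsMulCommutative H]
    (hH : H.index.Prime) (hg : g ∉ H) : centralizer {g} = center G ⊔ zpowers g := by
  have hgC : zpowers g ≤ centralizer {g} := zpowers_le.mpr (mem_centralizer_singleton_iff.mpr rfl)
  refine le_antisymm (fun x hx => ?_) (sup_le (center_le_centralizer _) hgC)
  have hxG : x ∈ H ⊔ zpowers g := sup_zpowers_eq_top_of_index_prime hH hg ▸ mem_top x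
  obtain ⟨a, ha, z, hz, rfl⟩ := mem_sup_of_normal_left.mp hxG
  have haC : a ∈ centralizer {g} := by
    simpa using mul_mem hx (inv_mem (hgC hz))
  exact mul_mem_sup (inf_centralizer_singleton_le_center hH hg ⟨ha, haC⟩) hz

theorem nat_card_isConj_eq_index_centralizer (g : G) :
    Nat.card {x // IsConj g x} = (centralizer {g}).index := by
  have he : {x : G // IsConj g x} ≃ MulAction.orbit (ConjAct G) g :=
    Equiv.subtypeEquivRight fun x => by rw [ConjAct.mem_orbit_conjAct, isConj_comm]
  rw [Nat.card_congr he, Nat.card_coe_set_eq, ← MulAction.index_stabilizer,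
    centralizer_eq_comap_stabilizer]
  exact (index_comap_of_surjective _ ConjAct.toConjAct.surjective).symm

theorem index_sup_zpowers_mul_orderOf (N : Subgroup G) [N.Normal] (g : G) :
    (N ⊔ zpowers g).index * orderOf (g : G ⧸ N) = N.index := by
  have hmap : (N ⊔ zpowers g).map (QuotientGroup.mk' N) = zpowers (g : G ⧸ N) := by
    rw [Subgroup.map_sup, QuotientGroup.map_mk'_self, MonoidHom.map_zpowers, bot_sup_eq]
    rfl
  rw [← index_map_eq _ (QuotientGroup.mk'_surjective N) 
    (by rw [QuotientGroup.ker_mk']; exact le_sup_left),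
    hmap, ← Nat.card_zpowers, index_mul_card, index_eq_card]

theorem nat_card_isConj_mul_index_eq_index_center [H.Normal] [IsMulCommutative H]
    (hH : H.index.Prime) (hG : center G ≠ ⊤) (hg : g ∉ H) :
    Nat.card {x // IsConj g x} * H.index = (center G).index := by
  have : Fact H.index.Prime := ⟨hH⟩
  have hg1 : (g : G ⧸ center G) ≠ 1 := fun h =>
    hg (center_le_of_index_prime hH hG ((QuotientGroup.eq_one_iff g).mp h))
  have hgp : (g : G ⧸ center G) ^ H.index = 1 := by
    rw [← QuotientGroup.mk_pow, QuotientGroup.eq_one_iff]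
    exact pow_index_mem_center hH hg
  rw [nat_card_isConj_eq_index_centralizer, centralizer_singleton_eq_center_sup_zpowers hH hg,
    ← orderOf_eq_prime hgp hg1, index_sup_zpowers_mul_orderOf]

end Subgroup

theorem stmt6_general (l : ℕ) (hl : l.Prime) (G : Type*) [Group G]
    (hnab : ¬ ∀ a b : G, a * b = b * a)
    (G' : Subgroup G) [G'.Normal] (hab : ∀ x y : G', x * y = y * x)
    (hidx : G'.index = l) :
    Subgroup.center G ≤ G' ∧
    (∀ g : G, g ∉ G' → g ^ l ∈ Subgroup.center G) ∧
    (∀ g : G, g ∉ G' →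
      Subgroup.centralizer {g} = Subgroup.closure (insert g (Subgroup.center G : Set G))) ∧
    (∀ g : G, g ∉ G' →
      Nat.card {x : G // IsConj g x} * l = (Subgroup.center G).index) := by
  subst hidx
  have : IsMulCommutative G' := ⟨⟨hab⟩⟩
  have hG : center G ≠ ⊤ := fun h => hnab fun a b => mem_center_iff.mp (h ▸ mem_top b) a
  refine ⟨center_le_of_index_prime hl hG, fun g hg => pow_index_mem_center hl hg,
    fun g hg => ?_, fun g hg => nat_card_isConj_mul_index_eq_index_center hl hG hg⟩
  rw [centralizer_singleton_eq_center_sup_zpowers hl hg, Set.insert_eq, Subgroup.closure_union,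
    ← zpowers_eq_closure, closure_eq, sup_comm]

/-- Claims used in the proof of Proposition 4.2: if `G` is a finite non-abelian group
with an abelian normal subgroup `G'` of prime index `l`, then (i) `Z(G) ≤ G'`;
(ii) `g^l ∈ Z(G)` for `g ∉ G'`; (iii) for `g ∉ G'` the centralizer of `g` is the
subgroup generated by `Z(G)` and `g`; (iv) for `g ∉ G'` the conjugacy class of `g`
has cardinality `[G : Z(G)]/l`. -/
theorem stmt6 (l : ℕ) (hl : l.Prime) (G : Type*) [Group G] [Fintype G]
    (hnab : ¬ ∀ a b : G, a * b = b * a)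
    (G' : Subgroup G) [G'.Normal] (hab : ∀ x y : G', x * y = y * x)
    (hidx : G'.index = l) :
    Subgroup.center G ≤ G' ∧
    (∀ g : G, g ∉ G' → g ^ l ∈ Subgroup.center G) ∧
    (∀ g : G, g ∉ G' →
      Subgroup.centralizer {g} = Subgroup.closure (insert g (Subgroup.center G : Set G))) ∧
    (∀ g : G, g ∉ G' →
      Nat.card {x : G // IsConj g x} * l = (Subgroup.center G).index) :=
  stmt6_general l hl G hnab G' hab hidx
end

section
/- Let G be a group, l a prime, and G' an abelian normal subgroup of G of index l, and let ver : G → G' denote the transfer homomorphism. Then the image of ver is contained in the center Z(G) of G. (Claim im(ver) ⊆ Z(G) from the proof of Lemma 4.1.) -/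
/-!
For a normal subgroup `H`, right multiplication by `y⁻¹` permutes the left transversals of `H`,
and the difference `s⁻¹ t` of two transversal elements over the same coset becomes
`y s⁻¹ t y⁻¹`. Computing the transfer with the transversal `T y⁻¹` instead of `T` therefore
shows that `transfer ϕ` does not change when `ϕ` is precomposed with conjugation by `y`.
For `ϕ = id` with `H` abelian this says `y * transfer g * y⁻¹ = transfer g`.
-/

open Subgroup Subgroup.leftTransversals MulOpposite
open scoped Pointwise IsMulCommutative

namespace Subgroup.leftTransversals

variable {G : Type*} [Group G] {H : Subgroup G}

theorem smul_op_smul_comm [H.Normal] (g y : G) (T : H.LeftTransversal) :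
    g • op y • T = op y • g • T :=
  Subtype.ext (smul_comm g (op y) (T : Set G))

variable {A : Type*} [CommGroup A] (ϕ : H →* A) [H.FiniteIndex]

theorem diff_comp {B : Type*} [CommGroup B] (f : A →* B) (S T : H.LeftTransversal) :
    diff (f.comp ϕ) S T = f (diff ϕ S T) := by
  simp only [diff, map_prod]
  rfl

theorem diff_op_inv_smul [H.Normal] (y : G) (S T : H.LeftTransversal) :
    diff ϕ (op y⁻¹ • S) (op y⁻¹ • T) =
      diff (ϕ.comp (MulAut.conjNormal y).toMonoidHom) S T := by
  let _ := H.fintypeQuotientOfFiniteIndex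
  refine Fintype.prod_equiv (MulAction.toPerm (op y⁻¹)).symm _ _ fun q ↦ congrArg ϕ ?_
  ext
  simp only [smul_apply_eq_smul_apply_inv_smul, op_smul_eq_mul, MulAction.toPerm_symm_apply,
    MulEquiv.coe_toMonoidHom, MulAut.conjNormal_apply]
  group

end Subgroup.leftTransversals

namespace MonoidHom

variable {G : Type*} [Group G] {H : Subgroup G} {A : Type*} [CommGroup A] (ϕ : H →* A)
  [H.FiniteIndex]

theorem transfer_comp {B : Type*} [CommGroup B] (f : A →* B) (g : G) :
    transfer (f.comp ϕ) g = f (transfer ϕ g) := by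
  rw [transfer_def _ default, transfer_def _ default, diff_comp]

theorem transfer_comp_conjNormal [H.Normal] (y g : G) :
    transfer (ϕ.comp (MulAut.conjNormal y).toMonoidHom) g = transfer ϕ g := by
  let T : H.LeftTransversal := default
  rw [transfer_def ϕ (MulOpposite.op y⁻¹ • T), smul_op_smul_comm, diff_op_inv_smul,
    ← transfer_def]

theorem transfer_id_mem_center [H.Normal] [IsMulCommutative H] (g : G) :
    (transfer (MonoidHom.id H) g : G) ∈ center G := by
  refine mem_center_iff.mpr fun y ↦ ?_
  have hconj : MulAut.conjNormal y (transfer (MonoidHom.id H) g) = transfer (MonoidHom.id H) g :=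
    calc _ = transfer ((MulAut.conjNormal y).toMonoidHom.comp (MonoidHom.id H)) g :=
          (transfer_comp _ _ g).symm
      _ = transfer ((MonoidHom.id H).comp (MulAut.conjNormal y).toMonoidHom) g := rfl
      _ = transfer (MonoidHom.id H) g := transfer_comp_conjNormal _ y g
  have hval := congrArg Subtype.val hconj
  rw [MulAut.conjNormal_apply] at hval
  exact mul_inv_eq_iff_eq_mul.mp hval

end MonoidHom

theorem stmt9_general (G : Type*) [Group G]
    (G' : Subgroup G) [G'.Normal] [IsMulCommutative G'] [G'.FiniteIndex] :
    ∀ g : G, ((MonoidHom.transfer (MonoidHom.id G') g : G') : G) ∈ Subgroup.center G :=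
  MonoidHom.transfer_id_mem_center

/-- Claim from the proof of Lemma 4.1: for an abelian normal subgroup `G'` of prime
index `l` in `G`, the image of the transfer map `ver : G → G'` is contained in the
center `Z(G)`. -/
theorem stmt9 (G : Type*) [Group G] (l : ℕ) (hl : l.Prime)
    (G' : Subgroup G) [G'.Normal] [IsMulCommutative G'] [G'.FiniteIndex]
    (hidx : G'.index = l) :
    ∀ g : G, ((MonoidHom.transfer (MonoidHom.id G') g : G') : G) ∈ Subgroup.center G :=
  stmt9_general G G'
end
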